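/- With Γ₂ as above and X_{−δ_j} acting by X_{−δ_j}(x^k ⊗ v) = (1/√2)k_j x^{k−δ_j} ⊗ v + (−1)^{|k|} x^k ⊗ T_{−j}(v), the intertwining identity X_{−δ_j}(Γ₂(x^k ⊗ v₀)) = Γ₂(−(1/√2) k_j x^{k−δ_j} ⊗ v₀) holds for all multi-indices k ∈ ℤ_{≥0}ⁿ and all 1 ≤ j ≤ n. -/

import Mathlib

open Finsupp

noncomputable section

abbrev V (n : ℕ) : Type := ((Fin n →₀ ℕ) × Fin (2*n+1)) →₀ ℂ

def b {n : ℕ} (k : Fin n →₀ ℕ) (j : Fin (2*n+1)) : V n := Finsupp.single (k, j) 1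

def mkOp {n : ℕ} (g : (Fin n →₀ ℕ) × Fin (2*n+1) → V n) : V n →ₗ[ℂ] V n :=
  Finsupp.lsum ℂ fun a => LinearMap.toSpanSingleton ℂ (V n) (g a)

def deg {n : ℕ} (k : Fin n →₀ ℕ) : ℕ := k.sum fun _ v => v

def sgn {n : ℕ} (k : Fin n →₀ ℕ) : ℂ := (-1) ^ deg k

def rt2 : ℂ := Real.sqrt 2

def idx0 {n : ℕ} : Fin (2*n+1) := ⟨0, by omega⟩

def idxLo {n : ℕ} (i : Fin n) : Fin (2*n+1) := ⟨i.1+1, by have := i.isLt; omega⟩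

def idxHi {n : ℕ} (i : Fin n) : Fin (2*n+1) := ⟨n+i.1+1, by have := i.isLt; omega⟩

/-- `T_i` applied to `x^k ⊗ v_j` (without the parity sign). -/
def TpApp {n : ℕ} (i : Fin n) (k : Fin n →₀ ℕ) (j : Fin (2*n+1)) : V n :=
  if j = idx0 then b k (idxLo i) else if j = idxHi i then b k idx0 else 0

/-- `T_{-i}` applied to `x^k ⊗ v_j` (without the parity sign). -/
def TmApp {n : ℕ} (i : Fin n) (k : Fin n →₀ ℕ) (j : Fin (2*n+1)) : V n :=
  if j = idx0 then -(b k (idxHi i)) else if j = idxLo i then b k idx0 else 0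

/-- The action of the odd root vector `X_{δ_j}` on `ℂ[x] ⊗ ℂ^{1|2n}`. -/
def Xplus {n : ℕ} (jj : Fin n) : V n →ₗ[ℂ] V n :=
  mkOp fun p => rt2⁻¹ • b (p.1 + Finsupp.single jj 1) p.2 + sgn p.1 • TpApp jj p.1 p.2

/-- The action of the odd root vector `X_{-δ_i}` on `ℂ[x] ⊗ ℂ^{1|2n}`. -/
def Xminus {n : ℕ} (i : Fin n) : V n →ₗ[ℂ] V n :=
  mkOp fun p => (rt2⁻¹ * (p.1 i : ℂ)) • b (p.1 - Finsupp.single i 1) p.2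
    + sgn p.1 • TmApp i p.1 p.2

/-- `Γ_{w₂} = 1⊗1 + √2 ∑ ∂_i ⊗ T_i - √2 ∑ x_i ⊗ T_{-i}`. -/
def Gamma2 {n : ℕ} : V n →ₗ[ℂ] V n :=
  mkOp fun p => b p.1 p.2
    + rt2 • ∑ i : Fin n, (sgn p.1 * (p.1 i : ℂ)) • TpApp i (p.1 - Finsupp.single i 1) p.2
    - rt2 • ∑ i : Fin n, sgn p.1 • TmApp i (p.1 + Finsupp.single i 1) p.2

/-- `Γ_{w₁} = 1⊗1 - √2 ∑ ∂_i ⊗ T_i + √2 ∑ x_i ⊗ T_{-i}`. -/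
def Gamma1 {n : ℕ} : V n →ₗ[ℂ] V n :=
  mkOp fun p => b p.1 p.2
    - rt2 • ∑ i : Fin n, (sgn p.1 * (p.1 i : ℂ)) • TpApp i (p.1 - Finsupp.single i 1) p.2
    + rt2 • ∑ i : Fin n, sgn p.1 • TmApp i (p.1 + Finsupp.single i 1) p.2

/-!
Write `Γ₂(x^k ⊗ v₀) = x^k ⊗ v₀ + √2 t_k` and split
`X_{-δ_j} = (1/√2) ∂_j + (-1)^{|·|} ⊗ T_{-j}`. The odd part sends `t_k` to `-k_j x^{k-δ_j} ⊗ v₀`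
(only the `∂_j ⊗ T_j` term of `t_k` survives, and `k`, `k - δ_j` have opposite parities).
Since `t_k` is, up to the sign `(-1)^{|k|}`, the operator `∑ ∂_i ⊗ T_i - ∑ x_i ⊗ T_{-i}` applied
to `x^k ⊗ v₀`, the relations `[∂_j, ∂_i] = 0` and `[∂_j, x_i] = δ_ij` give
`∂_j t_k = -k_j t_{k-δ_j} + (-1)^{|k|} x^k ⊗ v_{idxHi j}`, whose last term cancels the odd part
applied to `x^k ⊗ v₀`. What remains on `x^{k-δ_j} ⊗ v₀` is `k_j/√2 - √2 k_j = -k_j/√2`.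
-/

lemma mkOp_apply_b {n : ℕ} (g : (Fin n →₀ ℕ) × Fin (2*n+1) → V n) (k : Fin n →₀ ℕ)
    (p : Fin (2*n+1)) : mkOp g (b k p) = g (k, p) := by
  simp [mkOp, b]

lemma rt2_mul_self : rt2 * rt2 = 2 := by
  simp [rt2, ← Complex.ofReal_mul, Real.mul_self_sqrt zero_le_two]

lemma rt2_ne_zero : rt2 ≠ 0 := by
  intro h
  simpa [h] using rt2_mul_self

section Monomials

variable {n : ℕ}

lemma sgn_add_single (k : Fin n →₀ ℕ) (i : Fin n) :
    sgn (k + Finsupp.single i 1) = -sgn k := by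
  simp [sgn, deg, Finsupp.sum_add_index', pow_succ]

lemma sgn_sub_single_mul (k : Fin n →₀ ℕ) (j : Fin n) :
    sgn (k - Finsupp.single j 1) * (k j : ℂ) = -(sgn k * (k j : ℂ)) := by
  rcases eq_or_ne (k j) 0 with h | h
  · simp [h]
  · obtain ⟨m, rfl⟩ : ∃ m, k = m + Finsupp.single j 1 :=
      ⟨_, (tsub_add_cancel_of_le (Finsupp.single_le_iff.2 (Nat.one_le_iff_ne_zero.2 h))).symm⟩
    rw [add_tsub_cancel_right, sgn_add_single, neg_mul, neg_neg]

lemma sgn_mul_sgn (k : Fin n →₀ ℕ) : sgn k * sgn k = 1 := by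
  rw [sgn, ← mul_pow]; norm_num

lemma mul_sub_single_apply_comm (k : Fin n →₀ ℕ) (i j : Fin n) :
    k i * (k - Finsupp.single i 1 : Fin n →₀ ℕ) j =
      k j * (k - Finsupp.single j 1 : Fin n →₀ ℕ) i := by
  rcases eq_or_ne i j with rfl | h
  · rfl
  · simp [h, h.symm, Nat.mul_comm]

end Monomials

section Operators

variable {n : ℕ}

lemma idxLo_ne_idx0 (i : Fin n) : idxLo i ≠ idx0 := by
  simp [idxLo, idx0, Fin.ext_iff]

lemma idxHi_ne_idx0 (i : Fin n) : idxHi i ≠ idx0 := by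
  simp [idxHi, idx0, Fin.ext_iff]

lemma idxHi_ne_idxLo (i j : Fin n) : idxHi i ≠ idxLo j := by
  simp only [idxHi, idxLo, ne_eq, Fin.ext_iff]
  omega

lemma idxLo_inj {i j : Fin n} : idxLo i = idxLo j ↔ i = j := by
  simp [idxLo, Fin.ext_iff]

def partialX (j : Fin n) : V n →ₗ[ℂ] V n :=
  mkOp fun p => (p.1 j : ℂ) • b (p.1 - Finsupp.single j 1) p.2

def signedTm (j : Fin n) : V n →ₗ[ℂ] V n :=
  mkOp fun p => sgn p.1 • TmApp j p.1 p.2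

def gamma2Tail (k : Fin n →₀ ℕ) : V n :=
  ∑ i : Fin n, (sgn k * (k i : ℂ)) • b (k - Finsupp.single i 1) (idxLo i)
    + ∑ i : Fin n, sgn k • b (k + Finsupp.single i 1) (idxHi i)

lemma smul_b_add_sub_single (k : Fin n →₀ ℕ) (i j : Fin n) (p : Fin (2*n+1)) :
    (k j : ℂ) • b (k + Finsupp.single i 1 - Finsupp.single j 1) p =
      (k j : ℂ) • b (k - Finsupp.single j 1 + Finsupp.single i 1) p := by
  rcases eq_or_ne (k j) 0 with h | h
  · simp [h]
  · rw [tsub_add_eq_add_tsub (Finsupp.single_le_iff.2 (Nat.one_le_iff_ne_zero.2 h))]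

lemma Xminus_eq (j : Fin n) : Xminus j = rt2⁻¹ • partialX j + signedTm j := by
  ext ⟨m, p⟩
  simp [Xminus, partialX, signedTm, mkOp, mul_smul]

lemma Gamma2_b_idx0 (k : Fin n →₀ ℕ) :
    Gamma2 (b k idx0) = b k idx0 + rt2 • gamma2Tail k := by
  simp only [Gamma2, mkOp_apply_b, gamma2Tail, TpApp, TmApp, if_true, smul_neg,
    Finset.sum_neg_distrib, sub_neg_eq_add, smul_add, add_assoc]

lemma partialX_b (j : Fin n) (k : Fin n →₀ ℕ) (p : Fin (2*n+1)) :
    partialX j (b k p) = (k j : ℂ) • b (k - Finsupp.single j 1) p :=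
  mkOp_apply_b _ k p

lemma signedTm_b_idx0 (j : Fin n) (k : Fin n →₀ ℕ) :
    signedTm j (b k idx0) = -sgn k • b k (idxHi j) := by
  simp [signedTm, mkOp_apply_b, TmApp]

lemma signedTm_b_idxLo (j i : Fin n) (k : Fin n →₀ ℕ) :
    signedTm j (b k (idxLo i)) = if i = j then sgn k • b k idx0 else 0 := by
  rw [signedTm, mkOp_apply_b, TmApp, if_neg (idxLo_ne_idx0 i)]
  simp only [idxLo_inj]
  split_ifs <;> simp

lemma signedTm_b_idxHi (j i : Fin n) (k : Fin n →₀ ℕ) : signedTm j (b k (idxHi i)) = 0 := by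
  simp [signedTm, mkOp_apply_b, TmApp, idxHi_ne_idx0, idxHi_ne_idxLo]

lemma signedTm_gamma2Tail (j : Fin n) (k : Fin n →₀ ℕ) :
    signedTm j (gamma2Tail k) = -(k j : ℂ) • b (k - Finsupp.single j 1) idx0 := by
  simp only [gamma2Tail, map_add, map_sum, map_smul, signedTm_b_idxLo, signedTm_b_idxHi, smul_ite,
    smul_smul, smul_zero, Finset.sum_ite_eq', Finset.mem_univ, if_true, Finset.sum_const_zero,
    add_zero]
  congr 1
  have hsq := sgn_mul_sgn k
  linear_combination sgn k * sgn_sub_single_mul k j - (k j : ℂ) * hsq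

lemma partialX_gamma2Tail (j : Fin n) (k : Fin n →₀ ℕ) :
    partialX j (gamma2Tail k) =
      -(k j : ℂ) • gamma2Tail (k - Finsupp.single j 1) + sgn k • b k (idxHi j) := by
  have hLo : ∀ x : Fin n,
      (sgn k * (k x : ℂ) * ((k - Finsupp.single x 1 : Fin n →₀ ℕ) j : ℂ))
          • b (k - Finsupp.single x 1 - Finsupp.single j 1) (idxLo x) =
        (-(k j : ℂ) *
            (sgn (k - Finsupp.single j 1) * ((k - Finsupp.single j 1 : Fin n →₀ ℕ) x : ℂ))) •
          b (k - Finsupp.single j 1 - Finsupp.single x 1) (idxLo x) := by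
    intro x
    have hc : (k x : ℂ) * ((k - Finsupp.single x 1 : Fin n →₀ ℕ) j : ℂ) =
        (k j : ℂ) * ((k - Finsupp.single j 1 : Fin n →₀ ℕ) x : ℂ) := by
      exact_mod_cast mul_sub_single_apply_comm k x j
    rw [tsub_right_comm]
    congr 1
    linear_combination
      sgn k * hc + ((k - Finsupp.single j 1 : Fin n →₀ ℕ) x : ℂ) * sgn_sub_single_mul k j
  have hHi : ∀ x : Fin n,
      (sgn k * ((k + Finsupp.single x 1 : Fin n →₀ ℕ) j : ℂ))
          • b (k + Finsupp.single x 1 - Finsupp.single j 1) (idxHi x) =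
        (-(k j : ℂ) * sgn (k - Finsupp.single j 1))
          • b (k - Finsupp.single j 1 + Finsupp.single x 1) (idxHi x)
        + if x = j then sgn k • b k (idxHi j) else 0 := by
    intro x
    have hs : -(k j : ℂ) * sgn (k - Finsupp.single j 1) = sgn k * k j := by
      linear_combination -sgn_sub_single_mul k j
    rw [Finsupp.add_apply, Nat.cast_add, mul_add, add_smul, hs]
    congr 1
    · rw [mul_smul, mul_smul, smul_b_add_sub_single]
    rcases eq_or_ne x j with rfl | h
    · simp
    · simp [h]
  simp only [gamma2Tail, map_add, map_sum, map_smul, partialX_b, smul_add, Finset.smul_sum,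
    smul_smul, hLo, hHi, Finset.sum_add_distrib, Finset.sum_ite_eq', Finset.mem_univ, if_true,
    add_assoc]

end Operators

/-- Intertwining identity `X_{-δⱼ} ∘ Γ₂ = Γ₂ ∘ (-(1/√2) kⱼ ·)` on `x^k ⊗ v₀`. -/
theorem stmt13 (n : ℕ) (k : Fin n →₀ ℕ) (j : Fin n) :
    Xminus j (Gamma2 (b k idx0)) =
      Gamma2 ((-rt2⁻¹ * (k j : ℂ)) • b (k - Finsupp.single j 1) idx0) := by
  rw [Xminus_eq, map_smul, Gamma2_b_idx0, Gamma2_b_idx0]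
  simp only [LinearMap.add_apply, LinearMap.smul_apply, map_add, map_smul, partialX_b,
    signedTm_b_idx0, partialX_gamma2Tail, signedTm_gamma2Tail]
  have h0 := rt2_ne_zero
  match_scalars <;> field_simp
  · linear_combination -(k j : ℂ) * rt2_mul_self
  · ring
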